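/- A family P of self-adjoint operators is a perturbation of A ∈ 𝒞 if and only if (a) the range of P i is contained in the range of A i for every i ∈ I, and (b) L(P) = 0. -/

import Mathlib

/-!
If `A ± εP` are both positive, then on `ker A` the quadratic form of `P` is squeezed to zero, so
positivity of `A + εP` forces `ker A ≤ ker P`, which for self-adjoint operators is
`ran P ≤ ran A`. Conversely, write `A = S† S`; then `ker S = ker A ≤ ker P`, and since `S` is
bounded below on `(ker S)ᗮ` (finite dimension) one gets `|⟪P x, x⟫| ≤ C ‖S x‖² = C ⟪A x, x⟫`,
so `A + t P` stays positive for small `|t|`. The constraint `L(A + t P) = 1` is affine in `t`.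
-/

open ContinuousLinearMap

/-- The linear map `L(A) = (1/|G|) · Σ_{i ∈ I} Σ_{g ∈ G} (U g) ∘ (A i) ∘ (U g)†`
associated to a family of operators `A : I → (H →L[ℂ] H)`. -/
noncomputable def Lmap {H : Type*} [NormedAddCommGroup H] [InnerProductSpace ℂ H]
    [FiniteDimensional ℂ H] {G : Type*} [Group G] [Fintype G] {I : Type*} [Fintype I]
    (U : G → (H →L[ℂ] H)) (A : I → (H →L[ℂ] H)) : H →L[ℂ] H :=
  (Fintype.card G : ℂ)⁻¹ •
    ∑ i : I, ∑ g : G, U g ∘L A i ∘L ContinuousLinearMap.adjoint (U g)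

/-- The convex set `𝒞` of block operators corresponding to covariant POVMs with
outcome space `I × G`: families `A` with every `A i` positive semidefinite and `L(A) = 1`. -/
def covSet {H : Type*} [NormedAddCommGroup H] [InnerProductSpace ℂ H]
    [FiniteDimensional ℂ H] {G : Type*} [Group G] [Fintype G] {I : Type*} [Fintype I]
    (U : G → (H →L[ℂ] H)) : Set (I → (H →L[ℂ] H)) :=
  {A | (∀ i, (A i).IsPositive) ∧ Lmap U A = 1}

open Filter Topology
open scoped InnerProductSpace

namespace ContinuousLinearMap

section RCLike

variable {𝕜 E F : Type*} [RCLike 𝕜] [NormedAddCommGroup E] [InnerProductSpace 𝕜 E]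
  [NormedAddCommGroup F] [InnerProductSpace 𝕜 F]

local notation "⟪" x ", " y "⟫" => inner 𝕜 x y

theorem exists_norm_le_mul_norm_apply_of_mem_orthogonal_ker [FiniteDimensional 𝕜 E]
    (S : E →L[𝕜] F) : ∃ M : ℝ, ∀ v ∈ (S : E →ₗ[𝕜] F).kerᗮ, ‖v‖ ≤ M * ‖S v‖ := by
  set K := (S : E →ₗ[𝕜] F).ker
  have hinj : ((S : E →ₗ[𝕜] F) ∘ₗ Kᗮ.subtype).ker = ⊥ := by
    rw [LinearMap.ker_eq_bot']
    rintro ⟨v, hv⟩ hSv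
    exact Subtype.ext <| (Submodule.mem_bot 𝕜).mp <| (K.orthogonal_disjoint).le_bot ⟨hSv, hv⟩
  obtain ⟨M, -, hM⟩ := LinearMap.exists_antilipschitzWith _ hinj
  exact ⟨M, fun v hv => hM.le_mul_norm (map_zero _) ⟨v, hv⟩⟩

theorem exists_norm_inner_apply_self_le_of_ker_le [FiniteDimensional 𝕜 E] {P : E →L[𝕜] E}
    (hP : P.IsSymmetric) (S : E →L[𝕜] F)
    (h : (S : E →ₗ[𝕜] F).ker ≤ (P : E →ₗ[𝕜] E).ker) :
    ∃ C ≥ 0, ∀ x, ‖⟪P x, x⟫‖ ≤ C * ‖S x‖ ^ 2 := by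
  obtain ⟨M, hM⟩ := exists_norm_le_mul_norm_apply_of_mem_orthogonal_ker S
  refine ⟨‖P‖ * M ^ 2, by positivity, fun x => ?_⟩
  obtain ⟨k, hk, v, hv, rfl⟩ := (S : E →ₗ[𝕜] F).ker.exists_add_mem_mem_orthogonal x
  have hSk : S k = 0 := hk
  have hPk : P k = 0 := h hk
  have hquad : ⟪P (k + v), k + v⟫ = ⟪P v, v⟫ := by
    rw [map_add, hPk, zero_add, inner_add_right, show ⟪P v, k⟫ = ⟪v, P k⟫ from hP v k, hPk,
      inner_zero_right, zero_add]
  calc ‖⟪P (k + v), k + v⟫‖ = ‖⟪P v, v⟫‖ := by rw [hquad]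
    _ ≤ ‖P‖ * ‖v‖ ^ 2 := by
      grw [norm_inner_le_norm, le_opNorm, mul_assoc, ← sq]
    _ ≤ ‖P‖ * (M * ‖S v‖) ^ 2 := by gcongr; exact hM v hv
    _ = ‖P‖ * M ^ 2 * ‖S (k + v)‖ ^ 2 := by rw [map_add, hSk, zero_add]; ring

end RCLike

variable {H : Type*} [NormedAddCommGroup H] [InnerProductSpace ℂ H]

theorem IsPositive.exists_eq_adjoint_comp_self [CompleteSpace H] {A : H →L[ℂ] H}
    (hA : A.IsPositive) : ∃ S : H →L[ℂ] H, A = adjoint S ∘L S :=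
  CStarAlgebra.nonneg_iff_eq_star_mul_self.mp ((nonneg_iff_isPositive A).mpr hA)

theorem IsPositive.apply_eq_zero_of_re_inner_self_eq_zero [CompleteSpace H] {B : H →L[ℂ] H}
    (hB : B.IsPositive) {x : H} (hx : RCLike.re ⟪B x, x⟫_ℂ = 0) : B x = 0 := by
  obtain ⟨S, rfl⟩ := hB.exists_eq_adjoint_comp_self
  have hSx : S x = 0 := by
    rw [← norm_eq_zero, ← sq_eq_zero_iff, apply_norm_sq_eq_inner_adjoint_left, hx]
  rw [comp_apply, hSx, map_zero]

theorem ker_le_ker_of_isPositive_add_smul_of_isPositive_sub_smul [CompleteSpace H]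
    {A P : H →L[ℂ] H} {ε : ℝ} (hε : ε ≠ 0) (hadd : (A + ε • P).IsPositive)
    (hsub : (A - ε • P).IsPositive) : (A : H →ₗ[ℂ] H).ker ≤ (P : H →ₗ[ℂ] H).ker := by
  intro x (hx : A x = 0)
  have hneg : (A - ε • P) x = -((A + ε • P) x) := by simp [hx]
  have hq : RCLike.re ⟪(A + ε • P) x, x⟫_ℂ = 0 := by
    have := hsub.re_inner_nonneg_left x
    rw [hneg, inner_neg_left, map_neg] at this
    exact le_antisymm (neg_nonneg.mp this) (hadd.re_inner_nonneg_left x)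
  have hεPx : ε • P x = 0 := by simpa [hx] using hadd.apply_eq_zero_of_re_inner_self_eq_zero hq
  exact (smul_eq_zero.mp hεPx).resolve_left hε

theorem eventually_isPositive_add_smul [FiniteDimensional ℂ H] {A P : H →L[ℂ] H}
    (hA : A.IsPositive) (hP : IsSelfAdjoint P)
    (h : (A : H →ₗ[ℂ] H).ker ≤ (P : H →ₗ[ℂ] H).ker) :
    ∀ᶠ t : ℝ in 𝓝 0, (A + t • P).IsPositive := by
  have := FiniteDimensional.complete ℂ H
  obtain ⟨S, rfl⟩ := hA.exists_eq_adjoint_comp_self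
  rw [ker_adjoint_comp_self] at h
  obtain ⟨C, hC, hPS⟩ := exists_norm_inner_apply_self_le_of_ker_le hP.isSymmetric S h
  have hsmall : ∀ᶠ t : ℝ in 𝓝 0, |t| * C < 1 :=
    (continuous_abs.mul continuous_const).continuousAt.eventually_lt continuousAt_const (by simp)
  filter_upwards [hsmall] with t ht
  refine isPositive_def'.mpr ⟨hA.isSelfAdjoint.add ((IsSelfAdjoint.all t).smul hP), fun x => ?_⟩
  rw [reApplyInnerSelf_apply, add_apply, inner_add_left, map_add,
    ← apply_norm_sq_eq_inner_adjoint_left, smul_apply, RCLike.real_smul_eq_coe_smul (K := ℂ),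
    inner_smul_real_left, RCLike.smul_re]
  have hbound : |t * RCLike.re ⟪P x, x⟫_ℂ| ≤ ‖S x‖ ^ 2 :=
    calc |t * RCLike.re ⟪P x, x⟫_ℂ| ≤ |t| * ‖⟪P x, x⟫_ℂ‖ := by
          rw [abs_mul]; gcongr; exact RCLike.abs_re_le_norm _
      _ ≤ |t| * (C * ‖S x‖ ^ 2) := by gcongr; exact hPS x
      _ ≤ ‖S x‖ ^ 2 := by rw [← mul_assoc]; exact mul_le_of_le_one_left (by positivity) ht.le
  linarith [neg_abs_le (t * RCLike.re ⟪P x, x⟫_ℂ)]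

end ContinuousLinearMap

section Lmap

variable {H : Type*} [NormedAddCommGroup H] [InnerProductSpace ℂ H] [FiniteDimensional ℂ H]
  {G : Type*} [Group G] [Fintype G] {I : Type*} [Fintype I]

theorem Lmap_add_smul (U : G → (H →L[ℂ] H)) (A P : I → (H →L[ℂ] H)) (t : ℝ) :
    Lmap U (A + t • P) = Lmap U A + t • Lmap U P := by
  simp only [Lmap, Pi.add_apply, Pi.smul_apply, add_comp, comp_add, smul_comp, comp_smul,
    Finset.sum_add_distrib, Finset.smul_sum, smul_add, smul_comm t]

end Lmap

theorem isPerturbation_iff_range_le_and_Lmap_eq_zero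
    {H : Type*} [NormedAddCommGroup H] [InnerProductSpace ℂ H] [FiniteDimensional ℂ H]
    {G : Type*} [Group G] [Fintype G] {I : Type*} [Fintype I]
    (U : G → (H →L[ℂ] H))
    (A P : I → (H →L[ℂ] H)) (hA : A ∈ covSet U) (hP : ∀ i, IsSelfAdjoint (P i)) :
    (∃ ε > (0 : ℝ), ∀ t ∈ Set.Icc (-ε) ε, A + t • P ∈ covSet U) ↔
      ((∀ i, LinearMap.range (P i : H →ₗ[ℂ] H) ≤ LinearMap.range (A i : H →ₗ[ℂ] H)) ∧ Lmap U P = 0) := by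
  have := FiniteDimensional.complete ℂ H
  obtain ⟨hApos, hAL⟩ := hA
  have hker_iff (i : I) : (A i : H →ₗ[ℂ] H).ker ≤ (P i : H →ₗ[ℂ] H).ker ↔
      (P i : H →ₗ[ℂ] H).range ≤ (A i : H →ₗ[ℂ] H).range :=
    ker_le_ker_iff_range_le_range (hP i).isSymmetric (hApos i).isSymmetric
  constructor
  · rintro ⟨ε, hε, hpert⟩
    obtain ⟨hposAdd, hLAdd⟩ := hpert ε ⟨by linarith, le_rfl⟩
    obtain ⟨hposSub, -⟩ := hpert (-ε) ⟨le_rfl, by linarith⟩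
    refine ⟨fun i => (hker_iff i).mp ?_, ?_⟩
    · refine ker_le_ker_of_isPositive_add_smul_of_isPositive_sub_smul hε.ne' (hposAdd i) ?_
      simpa [sub_eq_add_neg] using hposSub i
    · rw [Lmap_add_smul, hAL, add_eq_left, smul_eq_zero] at hLAdd
      exact hLAdd.resolve_left hε.ne'
  · rintro ⟨hrange, hLP⟩
    have hpos : ∀ᶠ t : ℝ in 𝓝 0, ∀ i, (A i + t • P i).IsPositive := eventually_all.mpr fun i =>
      eventually_isPositive_add_smul (hApos i) (hP i) ((hker_iff i).mpr (hrange i))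
    obtain ⟨ε, hε, hεpos⟩ := (nhds_basis_Icc_pos (0 : ℝ)).eventually_iff.mp hpos
    refine ⟨ε, hε, fun t ht => ⟨hεpos (by simpa using ht), ?_⟩⟩
    rw [Lmap_add_smul, hAL, hLP, smul_zero, add_zero]
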